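/- The full semantic mutual information sits between down and up semantic mutual information: I_s(Ũ;Ṽ) ≤ Ĩ_s(Ũ;Ṽ) ≤ H(V) − H_s(Ṽ|U) ≤ I^s(Ũ;Ṽ). -/

import Mathlib

open Finset

/-- Probability of the block of index `i` under the partition induced by `blk`. -/
noncomputable def blockProb {U B : Type*} [Fintype U] [DecidableEq B]
    (p : U → ℝ) (blk : U → B) (i : B) : ℝ :=
  ∑ u : U, if blk u = i then p u else 0

/-- Semantic entropy: entropy of the block probabilities. -/
noncomputable def semEntropy {U B : Type*} [Fintype U] [Fintype B] [DecidableEq B]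
    (p : U → ℝ) (blk : U → B) : ℝ :=
  -∑ i : B, blockProb p blk i * Real.logb 2 (blockProb p blk i)

/-- Shannon entropy of a pmf on a finite alphabet (base 2). -/
noncomputable def shannonEntropy {U : Type*} [Fintype U] (p : U → ℝ) : ℝ :=
  -∑ u : U, p u * Real.logb 2 (p u)

/-- Semantic conditional entropy `H_s(Ṽ|U)` for the joint pmf `p` on `U × V`. -/
noncomputable def condSemEntropy {U V J : Type*} [Fintype U] [Fintype V] [Fintype J]
    [DecidableEq J] (p : U × V → ℝ) (blkV : V → J) : ℝ :=
  -∑ u : U, ∑ j : J,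
    (∑ v : V, if blkV v = j then p (u, v) else 0) *
      Real.logb 2 ((∑ v : V, if blkV v = j then p (u, v) else 0) / (∑ v : V, p (u, v)))

/-!
Merging outcomes never increases entropy, so `H_s(Ũ,Ṽ) ≤ H(U,V)` (first inequality) and
`H_s(Ũ,Ṽ) ≤ H_s(U,Ṽ) = H(U) + H_s(Ṽ|U)` by the chain rule (third inequality). For the middle one,
the chain rule gives `H_s(Ũ,Ṽ) = H_s(Ũ) + H(Ṽ|Ũ)`, and `H(Ṽ|Ũ) ≥ H(Ṽ|U)` by the log-sum inequality
because `Ũ` is a coarsening of `U`; it remains to use `H_s(Ṽ) ≤ H(V)`.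
-/

open Real

section LogSum

variable {ι : Type*}

/-- `log x ≤ x - 1` at `x = b t / a`; summed over `i` with `t = ∑ a / ∑ b`, this is the log-sum
inequality below. -/
lemma mul_log_add_sub_le_mul_log_div {a b t : ℝ} (ha : 0 ≤ a) (hb : 0 ≤ b)
    (hab : b = 0 → a = 0) (ht : 0 < t) :
    a * log t + a - b * t ≤ a * log (a / b) := by
  rcases ha.eq_or_lt with rfl | ha
  · simpa using mul_nonneg hb ht.le
  have hb : 0 < b := hb.lt_of_ne fun h => ha.ne' (hab h.symm)
  have key := log_le_sub_one_of_pos (show 0 < b * t / a by positivity)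
  rw [log_div (by positivity) ha.ne', log_mul hb.ne' ht.ne'] at key
  rw [log_div ha.ne' hb.ne']
  have : a * (b * t / a - 1) = b * t - a := by field_simp
  nlinarith

lemma sum_mul_log_div_sum_le (s : Finset ι) (a b : ι → ℝ) (ha : ∀ i ∈ s, 0 ≤ a i)
    (hb : ∀ i ∈ s, 0 ≤ b i) (hab : ∀ i ∈ s, b i = 0 → a i = 0) :
    (∑ i ∈ s, a i) * log ((∑ i ∈ s, a i) / ∑ i ∈ s, b i) ≤ ∑ i ∈ s, a i * log (a i / b i) := by
  set A := ∑ i ∈ s, a i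
  set B := ∑ i ∈ s, b i
  rcases (show 0 ≤ A from sum_nonneg ha).eq_or_lt with hA | hA
  · have ha0 := (sum_eq_zero_iff_of_nonneg ha).1 hA.symm
    rw [← hA, zero_mul]
    exact (sum_eq_zero fun i hi => by rw [ha0 i hi, zero_mul]).ge
  have hB : 0 < B := by
    refine (sum_nonneg hb).lt_of_ne fun hB => hA.ne' (sum_eq_zero fun i hi => hab i hi ?_)
    exact (sum_eq_zero_iff_of_nonneg hb).1 hB.symm i hi
  calc A * log (A / B) = ∑ i ∈ s, (a i * log (A / B) + a i - b i * (A / B)) := by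
        rw [sum_sub_distrib, sum_add_distrib, ← sum_mul, ← sum_mul]
        field_simp
        ring
    _ ≤ ∑ i ∈ s, a i * log (a i / b i) := sum_le_sum fun i hi =>
        mul_log_add_sub_le_mul_log_div (ha i hi) (hb i hi) (hab i hi) (by positivity)

lemma sum_mul_logb_div_sum_le {c : ℝ} (hc : 1 ≤ c) (s : Finset ι) (a b : ι → ℝ)
    (ha : ∀ i ∈ s, 0 ≤ a i) (hb : ∀ i ∈ s, 0 ≤ b i) (hab : ∀ i ∈ s, b i = 0 → a i = 0) :
    (∑ i ∈ s, a i) * logb c ((∑ i ∈ s, a i) / ∑ i ∈ s, b i) ≤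
      ∑ i ∈ s, a i * logb c (a i / b i) := by
  simp only [logb, mul_div_assoc', ← sum_div]
  exact div_le_div_of_nonneg_right (sum_mul_log_div_sum_le s a b ha hb hab) (log_nonneg hc)

lemma sum_mul_logb_eq_add_sum_mul_logb_div [Fintype ι] (c : ℝ) (x : ι → ℝ)
    (hx : ∀ i, 0 ≤ x i) :
    ∑ i, x i * logb c (x i) =
      (∑ i, x i) * logb c (∑ i, x i) + ∑ i, x i * logb c (x i / ∑ i, x i) := by
  rw [sum_mul, ← sum_add_distrib]
  refine sum_congr rfl fun i _ => ?_
  rcases (hx i).eq_or_lt with hi | hi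
  · simp [← hi]
  have hS : 0 < ∑ i, x i := hi.trans_le (single_le_sum (fun j _ => hx j) (mem_univ i))
  rw [logb_div hi.ne' hS.ne']
  ring

end LogSum

section BlockProb

variable {X Y A B C : Type*} [Fintype X]

lemma blockProb_nonneg [DecidableEq A] {q : X → ℝ} (hq : ∀ x, 0 ≤ q x) (f : X → A) (a : A) :
    0 ≤ blockProb q f a :=
  sum_nonneg fun x _ => by split_ifs <;> simp [hq x]

lemma le_blockProb [DecidableEq A] {q : X → ℝ} (hq : ∀ x, 0 ≤ q x) (f : X → A) (x : X) :
    q x ≤ blockProb q f (f x) := by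
  simpa [blockProb] using single_le_sum (f := fun y => if f y = f x then q y else 0)
    (fun y _ => by split_ifs <;> simp [hq y]) (mem_univ x)

lemma sum_blockProb_mul [Fintype A] [DecidableEq A] (q : X → ℝ) (f : X → A) (L : A → ℝ) :
    ∑ a, blockProb q f a * L a = ∑ x, q x * L (f x) := by
  simp only [blockProb, sum_mul, ite_mul, zero_mul]
  rw [sum_comm]
  simp

lemma blockProb_comp [Fintype A] [DecidableEq A] [DecidableEq C] (q : X → ℝ) (f : X → A)
    (h : A → C) (c : C) :
    blockProb q (fun x => h (f x)) c = blockProb (blockProb q f) h c := by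
  simpa [blockProb, mul_ite] using
    (sum_blockProb_mul q f fun a => if h a = c then (1 : ℝ) else 0).symm

lemma sum_filter_blockProb [Fintype A] [DecidableEq A] [DecidableEq C] (q : X → ℝ)
    (f : X → A) (h : A → C) (c : C) :
    ∑ a ∈ univ.filter (h · = c), blockProb q f a = blockProb q (fun x => h (f x)) c := by
  rw [sum_filter, blockProb_comp, blockProb]

lemma blockProb_fst [Fintype Y] [DecidableEq X] (q : X × Y → ℝ) (x : X) :
    blockProb q Prod.fst x = ∑ y, q (x, y) := by
  rw [blockProb, Fintype.sum_prod_type,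
    sum_eq_single x (fun u _ hu => sum_eq_zero fun y _ => if_neg hu) (by simp)]
  simp

lemma blockProb_fst_snd [Fintype Y] [DecidableEq X] [DecidableEq B] (q : X × Y → ℝ)
    (g : Y → B) (x : X) (b : B) :
    blockProb q (fun z => (z.1, g z.2)) (x, b) = blockProb (fun y => q (x, y)) g b := by
  simp [blockProb, Fintype.sum_prod_type, Prod.ext_iff, ite_and]

end BlockProb

section Entropy

variable {X Y A B C : Type*} [Fintype X]

lemma semEntropy_le_shannonEntropy [Fintype A] [DecidableEq A] {q : X → ℝ}
    (hq : ∀ x, 0 ≤ q x) (f : X → A) :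
    semEntropy q f ≤ shannonEntropy q := by
  rw [semEntropy, shannonEntropy, sum_blockProb_mul, neg_le_neg_iff]
  refine sum_le_sum fun x _ => ?_
  rcases (hq x).eq_or_lt with hx | hx
  · simp [← hx]
  · exact mul_le_mul_of_nonneg_left
      (logb_le_logb_of_le one_lt_two hx (le_blockProb hq f x)) hx.le

lemma semEntropy_comp [Fintype A] [Fintype C] [DecidableEq A] [DecidableEq C] (q : X → ℝ)
    (f : X → A) (h : A → C) :
    semEntropy q (fun x => h (f x)) = semEntropy (blockProb q f) h := by
  simp only [semEntropy, blockProb_comp]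

lemma semEntropy_comp_le [Fintype A] [Fintype C] [DecidableEq A] [DecidableEq C]
    {q : X → ℝ} (hq : ∀ x, 0 ≤ q x) (f : X → A) (h : A → C) :
    semEntropy q (fun x => h (f x)) ≤ semEntropy q f := by
  rw [semEntropy_comp]
  exact semEntropy_le_shannonEntropy (blockProb_nonneg hq f) h

lemma semEntropy_fst [Fintype Y] [DecidableEq X] (q : X × Y → ℝ) :
    semEntropy q Prod.fst = shannonEntropy fun x => ∑ y, q (x, y) := by
  simp only [semEntropy, shannonEntropy, blockProb_fst]

/-- `H(g | f)`: the entropy of the partition induced by `g` conditioned on the one induced by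
`f`. -/
noncomputable def semCondEntropy [Fintype A] [Fintype B] [DecidableEq A] [DecidableEq B]
    (q : X → ℝ) (f : X → A) (g : X → B) : ℝ :=
  -∑ a, ∑ b, blockProb q (fun x => (f x, g x)) (a, b) *
    logb 2 (blockProb q (fun x => (f x, g x)) (a, b) / blockProb q f a)

lemma sum_blockProb_pair [Fintype B] [DecidableEq A] [DecidableEq B] (q : X → ℝ)
    (f : X → A) (g : X → B) (a : A) :
    ∑ b, blockProb q (fun x => (f x, g x)) (a, b) = blockProb q f a := by
  simp only [blockProb, Prod.ext_iff, ite_and]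
  rw [sum_comm]
  simp

lemma blockProb_pair_le [Fintype B] [DecidableEq A] [DecidableEq B] {q : X → ℝ}
    (hq : ∀ x, 0 ≤ q x) (f : X → A) (g : X → B) (a : A) (b : B) :
    blockProb q (fun x => (f x, g x)) (a, b) ≤ blockProb q f a :=
  sum_blockProb_pair q f g a ▸
    single_le_sum (fun b' _ => blockProb_nonneg hq _ (a, b')) (mem_univ b)

lemma blockProb_pair [DecidableEq A] [DecidableEq B] (q : X → ℝ) (f : X → A) (g : X → B)
    (a : A) (b : B) :
    blockProb q (fun x => (f x, g x)) (a, b) =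
      blockProb (fun x => if g x = b then q x else 0) f a := by
  simp only [blockProb, Prod.ext_iff, ite_and]

theorem semEntropy_pair_eq_add_semCondEntropy [Fintype A] [Fintype B] [DecidableEq A]
    [DecidableEq B] {q : X → ℝ} (hq : ∀ x, 0 ≤ q x) (f : X → A) (g : X → B) :
    semEntropy q (fun x => (f x, g x)) = semEntropy q f + semCondEntropy q f g := by
  rw [semEntropy, Fintype.sum_prod_type, semEntropy, semCondEntropy, ← neg_add,
    ← sum_add_distrib]
  congr 1
  refine sum_congr rfl fun a _ => ?_
  rw [sum_mul_logb_eq_add_sum_mul_logb_div 2 _ fun b => blockProb_nonneg hq _ (a, b),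
    sum_blockProb_pair]

theorem semCondEntropy_le_comp [Fintype A] [Fintype B] [Fintype C] [DecidableEq A]
    [DecidableEq B] [DecidableEq C] {q : X → ℝ} (hq : ∀ x, 0 ≤ q x) (f : X → A) (g : X → B)
    (h : A → C) :
    semCondEntropy q f g ≤ semCondEntropy q (fun x => h (f x)) g := by
  rw [semCondEntropy, semCondEntropy, neg_le_neg_iff, sum_comm, sum_comm (s := univ (α := A))]
  refine sum_le_sum fun b _ => ?_
  rw [← sum_fiberwise univ h]
  refine sum_le_sum fun c _ => ?_
  have hsum_joint := sum_filter_blockProb (fun x => if g x = b then q x else 0) f h c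
  simp only [← blockProb_pair] at hsum_joint
  have logSum := sum_mul_logb_div_sum_le one_le_two (univ.filter (h · = c))
    (fun a => blockProb q (fun x => (f x, g x)) (a, b)) (blockProb q f)
    (fun a _ => blockProb_nonneg hq _ (a, b)) (fun a _ => blockProb_nonneg hq f a)
    (fun a _ ha => le_antisymm (ha ▸ blockProb_pair_le hq f g a b) (blockProb_nonneg hq _ (a, b)))
  rwa [hsum_joint, sum_filter_blockProb] at logSum

lemma condSemEntropy_eq_semCondEntropy [Fintype Y] [Fintype B] [DecidableEq X] [DecidableEq B]
    (q : X × Y → ℝ) (g : Y → B) :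
    condSemEntropy q g = semCondEntropy q Prod.fst (fun z => g z.2) := by
  simp only [condSemEntropy, semCondEntropy, blockProb_fst_snd, blockProb_fst]
  rfl

end Entropy

theorem fullSemMutualInfo_between
    {U V I J : Type*} [Fintype U] [Fintype V] [Fintype I] [Fintype J]
    [DecidableEq I] [DecidableEq J]
    (p : U × V → ℝ) (blkU : U → I) (blkV : V → J)
    (hp : ∀ x, 0 ≤ p x) :
    semEntropy (fun u => ∑ v : V, p (u, v)) blkU +
        semEntropy (fun v => ∑ u : U, p (u, v)) blkV - shannonEntropy p ≤
      semEntropy (fun u => ∑ v : V, p (u, v)) blkU +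
        semEntropy (fun v => ∑ u : U, p (u, v)) blkV -
        semEntropy p (fun x => (blkU x.1, blkV x.2)) ∧
    semEntropy (fun u => ∑ v : V, p (u, v)) blkU +
        semEntropy (fun v => ∑ u : U, p (u, v)) blkV -
        semEntropy p (fun x => (blkU x.1, blkV x.2)) ≤
      shannonEntropy (fun v => ∑ u : U, p (u, v)) - condSemEntropy p blkV ∧
    shannonEntropy (fun v => ∑ u : U, p (u, v)) - condSemEntropy p blkV ≤
      shannonEntropy (fun u => ∑ v : V, p (u, v)) +
        shannonEntropy (fun v => ∑ u : U, p (u, v)) -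
        semEntropy p (fun x => (blkU x.1, blkV x.2)) := by
  classical
  have hU : semEntropy (fun u => ∑ v, p (u, v)) blkU = semEntropy p (fun x => blkU x.1) := by
    rw [← funext (blockProb_fst p)]
    exact (semEntropy_comp p Prod.fst blkU).symm
  have chain_coarse := semEntropy_pair_eq_add_semCondEntropy hp (fun x => blkU x.1) (fun x => blkV x.2)
  have chain_fine := semEntropy_pair_eq_add_semCondEntropy hp Prod.fst (fun x => blkV x.2)
  rw [semEntropy_fst, ← condSemEntropy_eq_semCondEntropy] at chain_fine
  have cond_le := semCondEntropy_le_comp hp Prod.fst (fun x => blkV x.2) blkU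
  rw [← condSemEntropy_eq_semCondEntropy] at cond_le
  have coarsen : semEntropy p (fun x => (blkU x.1, blkV x.2)) ≤
      semEntropy p (fun x => (x.1, blkV x.2)) :=
    semEntropy_comp_le hp (fun x => (x.1, blkV x.2)) fun y => (blkU y.1, y.2)
  have hV := semEntropy_le_shannonEntropy (q := fun v => ∑ u, p (u, v))
    (fun v => sum_nonneg fun u _ => hp (u, v)) blkV
  have hUV := semEntropy_le_shannonEntropy hp fun x => (blkU x.1, blkV x.2)
  exact ⟨by linarith, by linarith, by linarith⟩
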